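/- arXiv:2207.07966 — 8 statements merged into one kernel-verified Lean document; each statement's English description precedes it below -/
import Mathlib

section
/- Let G be a group and let L be a subgroup generated by a finite set {y_1, ..., y_k} of elements, each of which has exactly k conjugates in G. Then the center Z(L) has index at most k^k in L. -/
/-!
An element of `L = ⟨y₁, …, y_k⟩` is central in `L` exactly when it commutes with every `yᵢ`,
so `Z(L) = L ∩ ⋂ᵢ C_G(yᵢ)`. Intersecting with `L` does not increase indices, and an
intersection of `k` subgroups of index `k` has index at most `k ^ k`.
-/

namespace Subgroup

variable {G : Type*} [Group G]

theorem relIndex_le_index {H : Subgroup G} (hH : H.index ≠ 0) (K : Subgroup G) :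
    H.relIndex K ≤ H.index := by
  simpa only [relIndex_top_right] using
    relIndex_le_of_le_right le_top (by rwa [relIndex_top_right])

theorem center_closure_eq_subgroupOf_centralizer (s : Set G) :
    center (closure s) = (centralizer s).subgroupOf (closure s) := by
  ext z
  rw [mem_subgroupOf, ← centralizer_closure, mem_center_iff, mem_centralizer_iff]
  exact ⟨fun h g hg => congrArg Subtype.val (h ⟨g, hg⟩), fun h g => Subtype.ext (h g g.2)⟩

theorem centralizer_range {ι : Type*} (y : ι → G) :
    centralizer (Set.range y) = ⨅ i, centralizer {y i} := by
  rw [centralizer_eq_iInf, iInf_range]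

theorem index_center_closure_range_le {ι : Type*} [Fintype ι] (y : ι → G)
    (hy : ∀ i, (centralizer {y i}).index ≠ 0) :
    (center (closure (Set.range y))).index ≤ ∏ i, (centralizer {y i}).index := by
  rw [center_closure_eq_subgroupOf_centralizer, ← relIndex, centralizer_range]
  calc (⨅ i, centralizer {y i}).relIndex (closure (Set.range y))
      ≤ ∏ i, (centralizer {y i}).relIndex (closure (Set.range y)) := relIndex_iInf_le _
    _ ≤ ∏ i, (centralizer {y i}).index :=
        Finset.prod_le_prod' fun i _ => relIndex_le_index (hy i) _

end Subgroup

theorem stmt0_general {G : Type*} [Group G] (k : ℕ) (y : Fin k → G)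
    (hconj : ∀ i, (Subgroup.centralizer {y i}).index = k)
    (L : Subgroup G) (hL : L = Subgroup.closure (Set.range y)) :
    (Subgroup.center ↥L).index ≤ k ^ k := by
  subst hL
  calc _ ≤ ∏ i, (Subgroup.centralizer {y i}).index :=
        Subgroup.index_center_closure_range_le y fun i => by rw [hconj i]; exact i.pos.ne'
    _ = k ^ k := by simp [hconj]

/-- If `L` is generated by elements `y 1, ..., y k`, each of which has exactly `k`
conjugates in `G` (i.e. its centralizer has index `k`), then the center of `L`
has index at most `k ^ k` in `L`. -/
theorem stmt0 {G : Type*} [Group G] (k : ℕ) (hk : 0 < k) (y : Fin k → G)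
    (hconj : ∀ i, (Subgroup.centralizer {y i}).index = k)
    (L : Subgroup G) (hL : L = Subgroup.closure (Set.range y)) :
    (Subgroup.center ↥L).index ≤ k ^ k :=
  stmt0_general k y hconj L hL
end

section
/- Let G be a group, T a normal subgroup, and B a subgroup normalizing T such that the commutator subgroup [T, B] is finite of order f. Then every element of B^{f!} commutes with every element of T, i.e., B^{f!} ≤ C_G(T). -/
/-!
Conjugation by `k ∈ K` is an automorphism of the finite group `C = ⁅H, K⁆` of order `n`. It fixes `1`,
so it permutes the `n - 1` other elements, and hence `y = k ^ (n - 1)!` centralizes `C`. For `h ∈ H`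
the commutator `⁅y, h⁆` lies in `C`, so it commutes with `y`; then `⁅y ^ n, h⁆ = ⁅y, h⁆ ^ n = 1`,
and `y ^ n = k ^ n!`.
-/

open scoped Nat commutatorElement

theorem Equiv.Perm.pow_factorial_card_sub_one_eq_one {α : Type*} [Finite α] (σ : Equiv.Perm α)
    {a : α} (ha : σ a = a) : σ ^ (Nat.card α - 1)! = 1 := by
  have hfix : ∀ x, σ x ≠ a ↔ x ≠ a := fun x ↦ σ.injective.ne_iff' ha
  have hcard : Nat.card {x // x ≠ a} = Nat.card α - 1 := by
    classical
    have := Fintype.ofFinite α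
    rw [Nat.card_eq_fintype_card, Nat.card_eq_fintype_card, ← Set.card_ne_eq a]
    rfl
  have hτ : σ.subtypePerm (p := (· ≠ a)) hfix ^ (Nat.card α - 1)! = 1 := by
    rw [← hcard, ← Nat.card_perm]; exact pow_card_eq_one'
  ext x
  by_cases hx : x = a
  · subst hx; exact Equiv.Perm.pow_apply_eq_self_of_apply_eq_self ha _
  · simpa using congrArg (fun τ : Equiv.Perm {x // x ≠ a} ↦ (τ ⟨x, hx⟩ : α)) hτ

theorem MulAut.pow_factorial_card_sub_one_eq_one {C : Type*} [Group C] [Finite C] (σ : MulAut C) :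
    σ ^ (Nat.card C - 1)! = 1 := by
  have := (MulAut.toPerm C σ).pow_factorial_card_sub_one_eq_one (map_one σ)
  rw [← map_pow] at this
  ext c
  exact DFunLike.congr_fun this c

theorem commutatorElement_pow_left_of_commute {G : Type*} [Group G] {y t : G}
    (h : Commute y ⁅y, t⁆) (n : ℕ) : ⁅y ^ n, t⁆ = ⁅y, t⁆ ^ n := by
  induction n with
  | zero => simp
  | succ n ih =>
    calc ⁅y ^ (n + 1), t⁆ = y * ⁅y ^ n, t⁆ * y⁻¹ * ⁅y, t⁆ := by
          simp only [commutatorElement_def]; group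
      _ = ⁅y, t⁆ ^ (n + 1) := by rw [ih, (h.pow_right n).eq, mul_inv_cancel_right, pow_succ]

namespace Subgroup

variable {G : Type*} [Group G] (H K : Subgroup G) [Finite (⁅H, K⁆ : Subgroup G)]

theorem pow_factorial_card_commutator_sub_one_mem_centralizer {k : G} (hk : k ∈ K) :
    k ^ (Nat.card (⁅H, K⁆ : Subgroup G) - 1)! ∈ centralizer ((⁅H, K⁆ : Subgroup G) : Set G) := by
  let y : normalizer ((⁅H, K⁆ : Subgroup G) : Set G) := ⟨k, normalizer_commutator_ge_right H K hk⟩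
  have hy : y ^ (Nat.card (⁅H, K⁆ : Subgroup G) - 1)! ∈
      (normalizerMonoidHom (⁅H, K⁆ : Subgroup G)).ker := by
    rw [MonoidHom.mem_ker, map_pow, MulAut.pow_factorial_card_sub_one_eq_one]
  rw [normalizerMonoidHom_ker, mem_subgroupOf] at hy
  exact hy

theorem pow_factorial_card_commutator_mem_centralizer {k : G} (hk : k ∈ K) :
    k ^ (Nat.card (⁅H, K⁆ : Subgroup G))! ∈ centralizer (H : Set G) := by
  set n := Nat.card (⁅H, K⁆ : Subgroup G)
  set y := k ^ (n - 1)!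
  have hn : n ≠ 0 := Nat.card_pos.ne'
  have hpow : k ^ n ! = y ^ n := by
    rw [← pow_mul, ← Nat.mul_factorial_pred hn, mul_comm]
  rw [hpow, mem_centralizer_iff]
  intro h hh
  have hc : ⁅y, h⁆ ∈ ⁅H, K⁆ :=
    commutator_comm K H ▸ commutator_mem_commutator (pow_mem hk _) hh
  have hcomm : Commute y ⁅y, h⁆ :=
    ((mem_centralizer_iff.mp
      (pow_factorial_card_commutator_sub_one_mem_centralizer H K hk)) _ hc).symm
  have horder : ⁅y, h⁆ ^ n = 1 :=
    congrArg Subtype.val (pow_card_eq_one' (G := (⁅H, K⁆ : Subgroup G)) (x := ⟨_, hc⟩))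
  have : ⁅y ^ n, h⁆ = 1 := by rw [commutatorElement_pow_left_of_commute hcomm, horder]
  exact (commutatorElement_eq_one_iff_commute.mp this).eq.symm

end Subgroup

theorem stmt1_general {G : Type*} [Group G] (T B : Subgroup G) (f : ℕ) (hf : Nat.card ↥(⁅T, B⁆ : Subgroup G) = f)
    (hfin : Finite ↥(⁅T, B⁆ : Subgroup G)) :
    Subgroup.closure {x : G | ∃ b ∈ B, x = b ^ (Nat.factorial f)} ≤
      Subgroup.centralizer (T : Set G) := by
  rw [Subgroup.closure_le]
  rintro _ ⟨b, hb, rfl⟩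
  exact hf ▸ Subgroup.pow_factorial_card_commutator_mem_centralizer T B hb

/-- If `T` is normal, `B` normalizes `T`, and `[T,B]` is finite of order `f`, then
the subgroup generated by `f!`-th powers of elements of `B` centralizes `T`. -/
theorem stmt1 {G : Type*} [Group G] (T B : Subgroup G) [T.Normal]
    (hBn : B ≤ Subgroup.normalizer (T : Set G)) (f : ℕ) (hf : Nat.card ↥(⁅T, B⁆ : Subgroup G) = f)
    (hfin : Finite ↥(⁅T, B⁆ : Subgroup G)) :
    Subgroup.closure {x : G | ∃ b ∈ B, x = b ^ (Nat.factorial f)} ≤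
      Subgroup.centralizer (T : Set G) :=
  stmt1_general T B f hf hfin
end

section
/- Let G be a group and let {A_i}_{i ∈ I} be a family of abstract normal subgroups of G, each torsion-free abelian and contained in the FC-center of G. Then the product of all the A_i is an abelian normal subgroup of G. -/
/-- The definition of `Monoid.IsTorsionFree` from the older Mathlib (since removed). -/
def Monoid.IsTorsionFree (G : Type*) [Monoid G] : Prop :=
  ∀ g : G, g ≠ 1 → ¬IsOfFinOrder g

/-!
If `a ∈ A` and `b ∈ B` with `A`, `B` normal, then `c = ⁅a, b⁆` lies in `A ∩ B`; when `B` is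
abelian, `c` commutes with `b`, so `⁅a, bⁿ⁆ = cⁿ`. As `a` has finitely many conjugates, some
power `bⁿ` (`n > 0`) centralizes `a`, whence `cⁿ = 1`, and torsion-freeness of `A` forces
`c = 1`. Pairwise commuting subgroups generate an abelian subgroup, and a join of normal
subgroups is normal.
-/

open scoped commutatorElement

namespace Subgroup

variable {G : Type*} [Group G]

theorem commutatorElement_pow_right {a b : G} (h : Commute ⁅a, b⁆ b) (n : ℕ) :
    ⁅a, b ^ n⁆ = ⁅a, b⁆ ^ n := by
  induction n with
  | zero => simp
  | succ n ih =>
    calc ⁅a, b ^ (n + 1)⁆ = ⁅a, b ^ n⁆ * (b ^ n * ⁅a, b⁆ * (b ^ n)⁻¹) := by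
          simp only [commutatorElement_def]; group
      _ = ⁅a, b⁆ ^ (n + 1) := by rw [ih, (h.symm.pow_left n).mul_inv_cancel, pow_succ]

theorem isOfFinOrder_commutatorElement {a b : G} (h : Commute ⁅a, b⁆ b)
    [hfin : (centralizer {a}).FiniteIndex] : IsOfFinOrder ⁅a, b⁆ := by
  obtain ⟨n, hn, -, hbn⟩ := exists_pow_mem_of_index_ne_zero hfin.index_ne_zero b
  refine isOfFinOrder_iff_pow_eq_one.2 ⟨n, hn, ?_⟩
  rw [← commutatorElement_pow_right h, commutatorElement_eq_one_iff_commute]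
  exact (mem_centralizer_singleton_iff.1 hbn).symm

theorem commute_of_mem_of_mem {A B : Subgroup G} [A.Normal] [B.Normal]
    (hA : Monoid.IsTorsionFree A) (hB : ∀ x ∈ B, ∀ y ∈ B, Commute x y)
    {a b : G} (ha : a ∈ A) (hb : b ∈ B) [(centralizer {a}).FiniteIndex] : Commute a b := by
  have hc : ⁅a, b⁆ ∈ A ⊓ B := commutator_le_inf A B (commutator_mem_commutator ha hb)
  have hfin : IsOfFinOrder (⟨⁅a, b⁆, hc.1⟩ : A) :=
    Submonoid.isOfFinOrder_coe.1 (isOfFinOrder_commutatorElement (hB _ hc.2 b hb))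
  by_contra hab
  exact hA _ (fun h1 => hab (commutatorElement_eq_one_iff_commute.1 (congrArg Subtype.val h1))) hfin

theorem commute_of_mem_iSup {ι : Sort*} {A : ι → Subgroup G}
    (h : ∀ i j, ∀ a ∈ A i, ∀ b ∈ A j, Commute a b) :
    ∀ a ∈ ⨆ i, A i, ∀ b ∈ ⨆ i, A i, Commute a b := by
  have hle : ⨆ i, A i ≤ centralizer (⨆ i, A i : Subgroup G) :=
    iSup_le fun i => le_centralizer_iff.2 <| iSup_le fun j =>
      le_centralizer_iff.2 fun b hb => mem_centralizer_iff.2 fun a ha => (h j i a ha b hb).eq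
  exact fun a ha b hb => mem_centralizer_iff.1 (hle hb) a ha

end Subgroup

/-- If `A i` is a family of torsion-free abelian normal subgroups of `G`, each contained
in the FC-center of `G`, then their product (join) is an abelian normal subgroup of `G`. -/
theorem stmt4 {G : Type*} [Group G] {I : Type*} (A : I → Subgroup G)
    (hnorm : ∀ i, (A i).Normal)
    (htf : ∀ i, Monoid.IsTorsionFree ↥(A i))
    (hab : ∀ i, ∀ a ∈ A i, ∀ b ∈ A i, Commute a b)
    (hFC : ∀ i, ∀ a ∈ A i, (Subgroup.centralizer {a}).FiniteIndex) :
    (⨆ i, A i).Normal ∧ ∀ a ∈ ⨆ i, A i, ∀ b ∈ ⨆ i, A i, Commute a b := by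
  refine ⟨Subgroup.iSup_normal A, Subgroup.commute_of_mem_iSup fun i j a ha b hb => ?_⟩
  have := hFC i a ha
  exact Subgroup.commute_of_mem_of_mem (htf i) (hab j) ha hb
end

section
/- Let G be a group and x ∈ G an element such that some power x^{e₁} has exactly k conjugates in G for a positive integer e₁. Then there exists a positive integer e such that x^e is contained in a torsion-free abelian normal subgroup of G all of whose elements have finitely many conjugates in G. -/
/-!
Put `y = x ^ e₁`. Its centralizer has finite index, so `y` has finitely many conjugates and the
normal core `K` of its centralizer has finite index `m`. Then `z = y ^ m` lies in `K`, while `K`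
centralizes every conjugate of `y`; hence the normal closure `A` of `z` is abelian, finitely
generated by the finitely many conjugates of `z`, and centralized by a finite-index subgroup.
The torsion of `A` is therefore finite, say of exponent `t`, and the `t`-th powers of elements of
`A` form a torsion-free normal subgroup of `G` containing `x ^ (e₁ * m * t)`.
-/

open Subgroup

namespace CommGroup

variable {A : Type*} [CommGroup A]

theorem fg_subgroup [Group.FG A] (H : Subgroup A) : Group.FG H := by
  have : AddGroup.FG (Additive A) := GroupFG.iff_add_fg.mp inferInstance
  have hfg := IsNoetherian.noetherian (R := ℤ) (AddSubgroup.toIntSubmodule H.toAddSubgroup)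
  rw [Group.fg_iff_subgroup_fg, Subgroup.fg_iff_add_fg]
  exact Submodule.fg_toAddSubgroup hfg

instance finite_torsion [Group.FG A] : Finite (torsion A) :=
  have := fg_subgroup (torsion A)
  finite_of_fg_isMulTorsion _ CommMonoid.torsion.isMulTorsion

theorem pow_exponent_torsion_eq_one {a : A}
    (h : IsOfFinOrder (a ^ Monoid.exponent (torsion A))) :
    a ^ Monoid.exponent (torsion A) = 1 := by
  by_cases ht : Monoid.exponent (torsion A) = 0
  · rw [ht, pow_zero]
  · exact congrArg Subtype.val (Monoid.pow_exponent_eq_one (⟨a, h.of_pow ht⟩ : torsion A))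

end CommGroup

namespace Subgroup

variable {G : Type*} [Group G]

theorem ncard_conjugatesOf (z : G) : (conjugatesOf z).ncard = (centralizer {z}).index := by
  have : conjugatesOf z = MulAction.orbit (ConjAct G) z := by
    ext g
    rw [ConjAct.mem_orbit_conjAct, isConj_comm]
    rfl
  rw [this, centralizer_eq_comap_stabilizer]
  exact ((index_comap_of_surjective _ ConjAct.toConjAct.surjective).trans
    (MulAction.index_stabilizer _ _)).symm

theorem finite_conjugatesOf (z : G) [(centralizer {z}).FiniteIndex] :
    (conjugatesOf z).Finite :=
  Set.finite_of_ncard_ne_zero (ncard_conjugatesOf z ▸ FiniteIndex.index_ne_zero)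

instance fg_normalClosure_singleton (z : G) [(centralizer {z}).FiniteIndex] :
    Group.FG (normalClosure {z}) := by
  have := (finite_conjugatesOf z).to_subtype
  rw [normalClosure, Group.conjugatesOfSet, Set.biUnion_singleton]
  infer_instance

theorem centralizer_le_centralizer_pow (y : G) (n : ℕ) :
    centralizer {y} ≤ centralizer {y ^ n} := fun g hg =>
  mem_centralizer_singleton_iff.mpr
    (Commute.pow_right (mem_centralizer_singleton_iff.mp hg : Commute g y) n).eq

theorem normalClosure_le_centralizer_normalCore (z : G) :
    normalClosure {z} ≤ centralizer (centralizer {z}).normalCore :=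
  normalClosure_le_normal <| Set.singleton_subset_iff.mpr fun _ hc =>
    mem_centralizer_singleton_iff.mp (normalCore_le _ hc)

theorem finiteIndex_centralizer_of_mem_normalClosure {z g : G} [(centralizer {z}).FiniteIndex]
    (hg : g ∈ normalClosure {z}) : (centralizer {g}).FiniteIndex :=
  finiteIndex_of_le <| (le_centralizer_iff.mp (normalClosure_le_centralizer_normalCore z)).trans <|
    centralizer_le (Set.singleton_subset_iff.mpr hg)

theorem isMulCommutative_normalClosure_pow_index_normalCore (y : G) :
    IsMulCommutative (normalClosure {y ^ (centralizer {y}).normalCore.index}) := by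
  set K := (centralizer {y}).normalCore
  have hzy : y ^ K.index ∈ normalClosure {y} :=
    pow_mem (subset_normalClosure (Set.mem_singleton y)) _
  have hK : normalClosure {y ^ K.index} ≤ K :=
    normalClosure_le_normal (Set.singleton_subset_iff.mpr (pow_index_mem K y))
  refine le_centralizer_iff_isMulCommutative.mp (hK.trans ?_)
  exact (le_centralizer_iff.mp (normalClosure_le_centralizer_normalCore y)).trans
    (centralizer_le (normalClosure_le_normal (Set.singleton_subset_iff.mpr hzy)))

def nthPowers (A : Subgroup G) [IsMulCommutative A] (n : ℕ) : Subgroup G where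
  carrier := {g | ∃ a ∈ A, a ^ n = g}
  one_mem' := ⟨1, A.one_mem, one_pow n⟩
  mul_mem' := by
    rintro _ _ ⟨a, ha, rfl⟩ ⟨b, hb, rfl⟩
    exact ⟨a * b, mul_mem ha hb, Commute.mul_pow (setLike_mul_comm ha hb) n⟩
  inv_mem' := by
    rintro _ ⟨a, ha, rfl⟩
    exact ⟨a⁻¹, inv_mem ha, inv_pow a n⟩

theorem nthPowers_le (A : Subgroup G) [IsMulCommutative A] (n : ℕ) : A.nthPowers n ≤ A := by
  rintro _ ⟨a, ha, rfl⟩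
  exact pow_mem ha n

theorem pow_mem_nthPowers {A : Subgroup G} [IsMulCommutative A] {a : G} (ha : a ∈ A) (n : ℕ) :
    a ^ n ∈ A.nthPowers n :=
  ⟨a, ha, rfl⟩

instance nthPowers_normal (A : Subgroup G) [A.Normal] [IsMulCommutative A] (n : ℕ) :
    (A.nthPowers n).Normal where
  conj_mem := by
    rintro _ ⟨a, ha, rfl⟩ g
    exact ⟨g * a * g⁻¹, Normal.conj_mem ‹_› a ha g, conj_pow⟩

open scoped IsMulCommutative in
theorem eq_one_of_isOfFinOrder_of_mem_nthPowers {A : Subgroup G} [IsMulCommutative A] {g : G}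
    (hg : g ∈ A.nthPowers (Monoid.exponent (CommGroup.torsion A))) (hfin : IsOfFinOrder g) :
    g = 1 := by
  obtain ⟨a, ha, rfl⟩ := hg
  exact congrArg Subtype.val <|
    CommGroup.pow_exponent_torsion_eq_one (a := ⟨a, ha⟩) (Submonoid.isOfFinOrder_coe.mp hfin)

end Subgroup

open scoped IsMulCommutative in
/-- If some power `x ^ e₁` of `x` has exactly `k` conjugates in `G`, then some power
`x ^ e` lies in a torsion-free abelian normal subgroup of `G` all of whose elements
have finitely many conjugates in `G`. -/
theorem stmt5 {G : Type*} [Group G] (x : G) (e₁ k : ℕ) (he₁ : 0 < e₁)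
    (hk : (Subgroup.centralizer {x ^ e₁}).index = k) (hkpos : 0 < k) :
    ∃ e : ℕ, 0 < e ∧ ∃ N : Subgroup G, N.Normal ∧ x ^ e ∈ N ∧
      (∀ g : ↥N, g ≠ 1 → ¬IsOfFinOrder g) ∧ (∀ a ∈ N, ∀ b ∈ N, Commute a b) ∧
      ∀ g ∈ N, (Subgroup.centralizer {g}).FiniteIndex := by
  set y := x ^ e₁
  have : (centralizer {y}).FiniteIndex := ⟨hk ▸ hkpos.ne'⟩
  set m := (centralizer {y}).normalCore.index
  have hm : m ≠ 0 := FiniteIndex.index_ne_zero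
  have : (centralizer {y ^ m}).FiniteIndex := finiteIndex_of_le (centralizer_le_centralizer_pow y m)
  set A := normalClosure {y ^ m}
  have : IsMulCommutative A := isMulCommutative_normalClosure_pow_index_normalCore y
  set t := Monoid.exponent (CommGroup.torsion A)
  have ht : t ≠ 0 := Monoid.exponent_ne_zero_of_finite
  refine ⟨e₁ * m * t, Nat.pos_of_ne_zero (mul_ne_zero (mul_ne_zero he₁.ne' hm) ht),
    A.nthPowers t, inferInstance, ?_, ?_, ?_, ?_⟩
  · rw [pow_mul, pow_mul]
    exact pow_mem_nthPowers (subset_normalClosure (Set.mem_singleton _)) t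
  · exact fun g hg hfin => hg (Subtype.ext
      (eq_one_of_isOfFinOrder_of_mem_nthPowers g.2 (Submonoid.isOfFinOrder_coe.mpr hfin)))
  · exact fun a ha b hb => setLike_mul_comm (nthPowers_le A t ha) (nthPowers_le A t hb)
  · exact fun g hg => finiteIndex_centralizer_of_mem_normalClosure (nthPowers_le A t hg)
end

section
/- Let G be a compact topological group with normalized Haar measure, and suppose G has an open normal subgroup T of index i such that for an element x ∈ G the image of ⟨x⟩ in G/C_G(T) has finite order j. Then Pr(⟨x⟩, G) ≥ 1/(ij), where Pr(H, G) is the probability that a random element of H commutes with a random element of G. -/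
/-!
The elements of `⟨x⟩` centralizing `T` form a closed subgroup `K` of index `j` in `⟨x⟩`, and every
pair in `K × T` commutes. A measurable subgroup of finite index `n` has measure `1/n` under a
left-invariant probability measure (its `n` cosets partition the group), so the commuting set
contains a rectangle of measure `(1/j) · (1/i)`.
-/

open MeasureTheory

/-- `commProbC μG H μH` is the probability that a random element of the subgroup `H`
(with measure `μH`) commutes with a random element of `G` (with measure `μG`). -/
noncomputable def commProbC {G : Type*} [Group G] [TopologicalSpace G] [MeasurableSpace G]
    (μG : Measure G) (H : Subgroup G) (μH : Measure ↥H) : ENNReal :=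
  (μH.prod μG) {p : ↥H × G | Commute (p.1 : G) p.2}

lemma Subgroup.measure_eq_inv_index {G : Type*} [Group G] [MeasurableSpace G] [MeasurableMul G]
    (μ : Measure G) [IsProbabilityMeasure μ] [μ.IsMulLeftInvariant]
    (H : Subgroup G) [H.FiniteIndex] (hH : MeasurableSet (H : Set G)) :
    μ H = (H.index : ENNReal)⁻¹ :=
  ENNReal.eq_inv_of_mul_eq_one_left <| by
    rw [mul_comm, H.index_mul_measure hH μ, measure_univ]

lemma measure_centralizer_prod_le_commProbC {G : Type*} [Group G] [TopologicalSpace G]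
    [MeasurableSpace G] (μG : Measure G) [SFinite μG] (H : Subgroup G) (μH : Measure H)
    (T : Subgroup G) :
    μH ((Subgroup.centralizer (T : Set G)).subgroupOf H) * μG T ≤ commProbC μG H μH := by
  rw [commProbC, ← Measure.prod_prod]
  refine measure_mono ?_
  rintro ⟨h, g⟩ ⟨hh, hg⟩
  exact (Subgroup.mem_centralizer_iff.mp (Subgroup.mem_subgroupOf.mp hh) g hg).symm

theorem stmt7_general {G : Type*} [Group G] [TopologicalSpace G] [IsTopologicalGroup G]
    [T2Space G] [MeasurableSpace G] [BorelSpace G]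
    (μG : Measure G) (hμG : μG.IsHaarMeasure) (hμG1 : IsProbabilityMeasure μG)
    (T : Subgroup G) (hT : IsOpen (T : Set G))
    (i : ℕ) (hi : T.index = i) (hipos : 0 < i)
    (x : G) (j : ℕ) (hjpos : 0 < j)
    (hj : (Subgroup.centralizer (T : Set G)).relIndex
        ((Subgroup.closure {x}).topologicalClosure) = j)
    (μH : Measure ↥((Subgroup.closure {x}).topologicalClosure))
    (hμH : μH.IsHaarMeasure) (hμH1 : IsProbabilityMeasure μH) :
    1 / ((i : ENNReal) * j) ≤ commProbC μG (Subgroup.closure {x}).topologicalClosure μH := by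
  have : T.FiniteIndex := ⟨hi ▸ hipos.ne'⟩
  have : ((Subgroup.centralizer (T : Set G)).subgroupOf
      (Subgroup.closure {x}).topologicalClosure).FiniteIndex := ⟨hj.trans_ne hjpos.ne'⟩
  have hμT : μG T = (i : ENNReal)⁻¹ := hi ▸ T.measure_eq_inv_index μG hT.measurableSet
  have hμK : μH ((Subgroup.centralizer (T : Set G)).subgroupOf
      (Subgroup.closure {x}).topologicalClosure) = (j : ENNReal)⁻¹ :=
    hj ▸ Subgroup.measure_eq_inv_index μH _
      ((Set.isClosed_centralizer (T : Set G)).measurableSet.preimage measurable_subtype_coe)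
  calc 1 / ((i : ENNReal) * j) = μH _ * μG T := by
        rw [hμK, hμT, one_div, ENNReal.mul_inv (by simp) (by simp), mul_comm]
    _ ≤ _ := measure_centralizer_prod_le_commProbC μG _ μH T

/-- If a compact group `G` has an open normal subgroup `T` of index `i` and the elements of
the closed monothetic subgroup `⟨x⟩` centralizing `T` form a subgroup of index `j` in `⟨x⟩`,
then `Pr(⟨x⟩, G) ≥ 1/(i·j)` with respect to normalized Haar measures. -/
theorem stmt7 {G : Type*} [Group G] [TopologicalSpace G] [IsTopologicalGroup G]
    [CompactSpace G] [T2Space G] [MeasurableSpace G] [BorelSpace G]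
    (μG : Measure G) (hμG : μG.IsHaarMeasure) (hμG1 : IsProbabilityMeasure μG)
    (T : Subgroup G) (hT : IsOpen (T : Set G)) [T.Normal]
    (i : ℕ) (hi : T.index = i) (hipos : 0 < i)
    (x : G) (j : ℕ) (hjpos : 0 < j)
    (hj : (Subgroup.centralizer (T : Set G)).relIndex
        ((Subgroup.closure {x}).topologicalClosure) = j)
    (μH : Measure ↥((Subgroup.closure {x}).topologicalClosure))
    (hμH : μH.IsHaarMeasure) (hμH1 : IsProbabilityMeasure μH) :
    1 / ((i : ENNReal) * j) ≤ commProbC μG (Subgroup.closure {x}).topologicalClosure μH :=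
  stmt7_general μG hμG hμG1 T hT i hi hipos x j hjpos hj μH hμH hμH1
end

section
/- Let K be a subgroup of a compact group G. If G has an open normal subgroup T such that K/C_K(T) is torsion, then Pr(⟨x⟩, G) > 0 for every x ∈ K. -/
open MeasureTheory Pointwise

namespace Subgroup

variable {G : Type*} [Group G]

lemma zpowers_subset_iUnion_pow_smul (C : Subgroup G) {x : G} {n : ℕ} (hn : 0 < n)
    (hx : x ^ n ∈ C) : (zpowers x : Set G) ⊆ ⋃ i ∈ Finset.range n, x ^ i • (C : Set G) := by
  rintro _ ⟨k, rfl⟩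
  have hn' : (0 : ℤ) < n := by exact_mod_cast hn
  obtain ⟨r, hr⟩ : ∃ r : ℕ, (r : ℤ) = k % n :=
    ⟨_, Int.toNat_of_nonneg (Int.emod_nonneg k hn'.ne')⟩
  have hrn : r < n := by have := Int.emod_lt_of_pos k hn'; omega
  refine Set.mem_biUnion (Finset.mem_range.mpr hrn) ⟨(x ^ n) ^ (k / n), C.zpow_mem hx _, ?_⟩
  change x ^ r * (x ^ n) ^ (k / n) = x ^ k
  rw [← zpow_natCast, ← zpow_natCast, ← zpow_mul, ← zpow_add, hr, Int.emod_add_mul_ediv]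

variable [TopologicalSpace G] [IsTopologicalGroup G]

lemma iUnion_pow_smul_eq_univ_of_dense_zpowers {C : Subgroup G} (hC : IsClosed (C : Set G))
    {x : G} (hdense : Dense (zpowers x : Set G)) {n : ℕ} (hn : 0 < n) (hx : x ^ n ∈ C) :
    ⋃ i ∈ Finset.range n, x ^ i • (C : Set G) = Set.univ := by
  have hclosed : IsClosed (⋃ i ∈ Finset.range n, x ^ i • (C : Set G)) :=
    (Finset.range n).finite_toSet.isClosed_biUnion fun i _ ↦ hC.smul (x ^ i)
  rw [← hclosed.closure_eq]
  exact (hdense.mono (C.zpowers_subset_iUnion_pow_smul hn hx)).closure_eq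

lemma dense_zpowers_topologicalClosure (x : G) :
    Dense ((zpowers ⟨x, le_topologicalClosure _ (subset_closure rfl)⟩ :
      Subgroup (closure {x} : Subgroup G).topologicalClosure) :
        Set (closure {x} : Subgroup G).topologicalClosure) := by
  refine Topology.IsInducing.subtypeVal.dense_iff.mpr fun h ↦ ?_
  rw [← coe_subtype, ← coe_map, MonoidHom.map_zpowers, coe_subtype, zpowers_eq_closure,
    ← topologicalClosure_coe]
  exact h.2

variable [MeasurableSpace G]

lemma measure_pos_of_dense_zpowers_of_pow_mem (μ : Measure G) [μ.IsMulLeftInvariant] [NeZero μ]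
    {C : Subgroup G} (hC : IsClosed (C : Set G)) {x : G} (hdense : Dense (zpowers x : Set G))
    {n : ℕ} (hn : 0 < n) (hx : x ^ n ∈ C) : 0 < μ C := by
  rw [pos_iff_ne_zero]
  intro hμC
  have : μ Set.univ ≤ 0 := calc
    μ Set.univ = μ (⋃ i ∈ Finset.range n, x ^ i • (C : Set G)) := by
      rw [iUnion_pow_smul_eq_univ_of_dense_zpowers hC hdense hn hx]
    _ ≤ ∑ i ∈ Finset.range n, μ (x ^ i • (C : Set G)) := measure_biUnion_finset_le _ _
    _ = 0 := by simp [measure_smul, hμC]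
  exact NeZero.ne μ (Measure.measure_univ_eq_zero.mp (nonpos_iff_eq_zero.mp this))

end Subgroup

lemma mul_measure_centralizer_le_commProbC {G : Type*} [Group G] [TopologicalSpace G]
    [MeasurableSpace G] (μG : Measure G) [SFinite μG] (H : Subgroup G) (μH : Measure H)
    (s : Set G) :
    μH ((Subgroup.centralizer s).subgroupOf H) * μG s ≤ commProbC μG H μH := by
  rw [commProbC, ← Measure.prod_prod]
  refine measure_mono ?_
  rintro ⟨h, g⟩ ⟨hh, hg⟩
  exact ((Subgroup.mem_centralizer_iff.mp (Subgroup.mem_subgroupOf.mp hh)) g hg).symm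

theorem stmt8_general {G : Type*} [Group G] [TopologicalSpace G] [IsTopologicalGroup G]
    [T2Space G] [MeasurableSpace G]
    (μG : Measure G) (hμG : μG.IsHaarMeasure) (hμG1 : IsProbabilityMeasure μG)
    (K T : Subgroup G) (hT : IsOpen (T : Set G))
    (htor : ∀ k ∈ K, ∃ n : ℕ, 0 < n ∧ k ^ n ∈ Subgroup.centralizer (T : Set G)) :
    ∀ x ∈ K, ∀ μH : Measure ↥((Subgroup.closure {x}).topologicalClosure),
      μH.IsHaarMeasure → IsProbabilityMeasure μH →
      0 < commProbC μG (Subgroup.closure {x}).topologicalClosure μH := by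
  intro x hx μH _ _
  obtain ⟨n, hn, hxn⟩ := htor x hx
  have hC : IsClosed ((Subgroup.centralizer (T : Set G)).subgroupOf
      (Subgroup.closure {x}).topologicalClosure : Set (Subgroup.closure {x}).topologicalClosure) :=
    (Set.isClosed_centralizer (T : Set G)).preimage continuous_subtype_val
  have hμC := Subgroup.measure_pos_of_dense_zpowers_of_pow_mem μH hC
    (Subgroup.dense_zpowers_topologicalClosure x) hn (Subgroup.mem_subgroupOf.mpr hxn)
  have hμT : 0 < μG T := hT.measure_pos μG ⟨1, T.one_mem⟩
  exact (ENNReal.mul_pos hμC.ne' hμT.ne').trans_le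
    (mul_measure_centralizer_le_commProbC μG _ μH _)

/-- If a compact group `G` has an open normal subgroup `T` such that `K/C_K(T)` is torsion,
then `Pr(⟨x⟩, G) > 0` for every `x ∈ K`, where `⟨x⟩` is the closed monothetic subgroup
generated by `x` and all measures are normalized Haar measures. -/
theorem stmt8 {G : Type*} [Group G] [TopologicalSpace G] [IsTopologicalGroup G]
    [CompactSpace G] [T2Space G] [MeasurableSpace G] [BorelSpace G]
    (μG : Measure G) (hμG : μG.IsHaarMeasure) (hμG1 : IsProbabilityMeasure μG)
    (K T : Subgroup G) (hT : IsOpen (T : Set G)) [T.Normal]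
    (htor : ∀ k ∈ K, ∃ n : ℕ, 0 < n ∧ k ^ n ∈ Subgroup.centralizer (T : Set G)) :
    ∀ x ∈ K, ∀ μH : Measure ↥((Subgroup.closure {x}).topologicalClosure),
      μH.IsHaarMeasure → IsProbabilityMeasure μH →
      0 < commProbC μG (Subgroup.closure {x}).topologicalClosure μH :=
  stmt8_general μG hμG hμG1 K T hT htor
end

section
/- Let G be a compact group such that G/Z(G) is torsion. Then Pr(⟨x⟩, G) > 0 for every x ∈ G. -/
open MeasureTheory Pointwise

/-! If `x ^ n` is central, the closed set `⋃_{0 ≤ i < n} x ^ i • Z(G)` contains the cyclic group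
`⟨x⟩`, hence its closure `H`. So finitely many translates of `D = H ∩ Z(G)` cover `H`, forcing
`D` to have positive Haar measure in `H`; and `D × G` lies in the set of commuting pairs. -/

theorem Subgroup.isClosed_center (G : Type*) [Group G] [TopologicalSpace G]
    [IsTopologicalGroup G] [T2Space G] : IsClosed (Subgroup.center G : Set G) := by
  rw [Subgroup.coe_center, ← Set.centralizer_univ]
  exact Set.isClosed_centralizer _

theorem Subgroup.closure_singleton_subset_iUnion_zpow_smul {G : Type*} [Group G]
    {C : Subgroup G} {g : G} {n : ℕ} (hn : 0 < n) (hgn : g ^ n ∈ C) :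
    (Subgroup.closure {g} : Set G) ⊆ ⋃ i ∈ Finset.Ico (0 : ℤ) n, g ^ i • (C : Set G) := by
  intro a ha
  obtain ⟨k, rfl⟩ := Subgroup.mem_closure_singleton.1 ha
  have hn' : (0 : ℤ) < n := by exact_mod_cast hn
  refine Set.mem_biUnion (x := k % n)
    (Finset.mem_Ico.2 ⟨Int.emod_nonneg k hn'.ne', Int.emod_lt_of_pos k hn'⟩) ?_
  refine ⟨(g ^ n) ^ (k / n), zpow_mem hgn _, ?_⟩
  change g ^ (k % n) * (g ^ n) ^ (k / n) = g ^ k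
  rw [← zpow_natCast, ← zpow_mul, ← zpow_add, Int.emod_add_mul_ediv]

theorem Subgroup.topologicalClosure_closure_singleton_subset_iUnion_zpow_smul {G : Type*}
    [Group G] [TopologicalSpace G] [IsTopologicalGroup G] {C : Subgroup G}
    (hC : IsClosed (C : Set G)) {g : G} {n : ℕ} (hn : 0 < n) (hgn : g ^ n ∈ C) :
    ((Subgroup.closure {g}).topologicalClosure : Set G) ⊆
      ⋃ i ∈ Finset.Ico (0 : ℤ) n, g ^ i • (C : Set G) :=
  closure_minimal (closure_singleton_subset_iUnion_zpow_smul hn hgn) <|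
    (Finset.Ico (0 : ℤ) n).finite_toSet.isClosed_biUnion fun _ _ => hC.smul _

theorem MeasureTheory.measure_pos_of_biUnion_smul_eq_univ {G ι : Type*} [Group G]
    [MeasurableSpace G] [MeasurableMul G] (μ : Measure G) [μ.IsMulLeftInvariant] [NeZero μ]
    {A : Set G} {I : Set ι} (hI : I.Countable) (g : ι → G)
    (hcover : ⋃ i ∈ I, g i • A = Set.univ) : 0 < μ A := by
  refine pos_iff_ne_zero.2 fun hA => NeZero.ne μ ?_
  rw [← Measure.measure_univ_eq_zero, ← hcover, measure_biUnion_null_iff hI]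
  exact fun i _ => (measure_smul μ (g i) A).trans hA

theorem commProbC_pos_of_measure_center_pos {G : Type*} [Group G] [TopologicalSpace G]
    [MeasurableSpace G] (μG : Measure G) [NeZero μG] [SFinite μG] (H : Subgroup G)
    (μH : Measure H) (hZ : 0 < μH ((Subgroup.center G).comap H.subtype)) :
    0 < commProbC μG H μH := by
  have hcomm : ((Subgroup.center G).comap H.subtype : Set H) ×ˢ Set.univ ⊆
      {p : H × G | Commute (p.1 : G) p.2} :=
    fun p hp => (Subgroup.mem_center_iff.1 hp.1 p.2).symm
  calc 0 < μH ((Subgroup.center G).comap H.subtype) * μG Set.univ :=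
        ENNReal.mul_pos hZ.ne' (Measure.measure_univ_ne_zero.2 (NeZero.ne μG))
    _ = (μH.prod μG) (((Subgroup.center G).comap H.subtype : Set H) ×ˢ Set.univ) :=
        (Measure.prod_prod _ _).symm
    _ ≤ commProbC μG H μH := measure_mono hcomm

theorem stmt9_general {G : Type*} [Group G] [TopologicalSpace G] [IsTopologicalGroup G]
    [T2Space G] [MeasurableSpace G] [BorelSpace G]
    (μG : Measure G) (hμG1 : IsProbabilityMeasure μG)
    (htor : ∀ g : G, ∃ n : ℕ, 0 < n ∧ g ^ n ∈ Subgroup.center G) :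
    ∀ x : G, ∀ μH : Measure ↥((Subgroup.closure {x}).topologicalClosure),
      μH.IsHaarMeasure → IsProbabilityMeasure μH →
      0 < commProbC μG (Subgroup.closure {x}).topologicalClosure μH := by
  intro x μH _ _
  refine commProbC_pos_of_measure_center_pos μG _ μH ?_
  obtain ⟨n, hn, hxn⟩ := htor x
  have hxH : x ∈ (Subgroup.closure {x}).topologicalClosure :=
    Subgroup.le_topologicalClosure _ (Subgroup.mem_closure_singleton_self x)
  refine measure_pos_of_biUnion_smul_eq_univ μH (Finset.Ico (0 : ℤ) n).countable_toSet
    (fun i => (⟨x, hxH⟩ : _) ^ i) (Set.eq_univ_of_forall fun h => ?_)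
  have hmem := Subgroup.topologicalClosure_closure_singleton_subset_iUnion_zpow_smul
    (Subgroup.isClosed_center G) hn hxn h.2
  simpa [Set.mem_smul_set_iff_inv_smul_mem, Subgroup.mem_subgroupOf] using hmem

/-- If `G` is a compact group with `G/Z(G)` torsion, then `Pr(⟨x⟩, G) > 0` for every
`x ∈ G`, with respect to normalized Haar measures. -/
theorem stmt9 {G : Type*} [Group G] [TopologicalSpace G] [IsTopologicalGroup G]
    [CompactSpace G] [T2Space G] [MeasurableSpace G] [BorelSpace G]
    (μG : Measure G) (hμG : μG.IsHaarMeasure) (hμG1 : IsProbabilityMeasure μG)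
    (htor : ∀ g : G, ∃ n : ℕ, 0 < n ∧ g ^ n ∈ Subgroup.center G) :
    ∀ x : G, ∀ μH : Measure ↥((Subgroup.closure {x}).topologicalClosure),
      μH.IsHaarMeasure → IsProbabilityMeasure μH →
      0 < commProbC μG (Subgroup.closure {x}).topologicalClosure μH :=
  stmt9_general μG hμG1 htor
end

section
/- Let G be a compact group and M a closed abelian subgroup such that some nonempty open subset V ⊆ M satisfies: x^k has at most s conjugates in G for all x ∈ V (for fixed positive integers k, s). Then there exist positive integers l and m such that every element of M^l has at most ms conjugates in G. -/
/-!
By compactness finitely many translates `g⁻¹ V` (`g ∈ t`) cover `M`, and by pigeonhole on the powers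
of `g` some `g ^ n_g` lies in `V⁻¹ V`. Since the centralizer of a product contains the intersection
of the centralizers, `(g ^ n_g) ^ k` has at most `s²` conjugates. For `l = k ∏ n_g` and `y ∈ M`,
writing `y = g⁻¹ (g y)` with `g y ∈ V` shows that `y ^ l` has at most `s² · s` conjugates; as `M`
is abelian, the `l`-th powers of its elements already form a subgroup.
-/

open Subgroup Pointwise

section Conjugates

variable {G : Type*} [Group G]

/-- `g` has at most `c` conjugates; the positivity clause matters since an infinite index is `0`. -/
def HasAtMostConjugates (g : G) (c : ℕ) : Prop :=
  0 < (centralizer {g}).index ∧ (centralizer {g}).index ≤ c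

variable {g h x : G} {c d : ℕ}

theorem hasAtMostConjugates_of_le_centralizer {H : Subgroup G} (hH : H ≤ centralizer {x})
    (h0 : H.index ≠ 0) (hc : H.index ≤ c) : HasAtMostConjugates x c :=
  ⟨Nat.pos_of_ne_zero (ne_zero_of_dvd_ne_zero h0 (index_dvd_of_le hH)),
    (Nat.le_of_dvd (Nat.pos_of_ne_zero h0) (index_dvd_of_le hH)).trans hc⟩

theorem HasAtMostConjugates.of_mem_closure (hg : HasAtMostConjugates g c)
    (hx : x ∈ Subgroup.closure {g}) : HasAtMostConjugates x c :=
  hasAtMostConjugates_of_le_centralizer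
    ((centralizer_closure {g}).ge.trans (centralizer_le (Set.singleton_subset_iff.mpr hx)))
    hg.1.ne' hg.2

theorem HasAtMostConjugates.pow (hg : HasAtMostConjugates g c) (n : ℕ) :
    HasAtMostConjugates (g ^ n) c :=
  hg.of_mem_closure (pow_mem (Subgroup.subset_closure (Set.mem_singleton g)) n)

theorem HasAtMostConjugates.inv (hg : HasAtMostConjugates g c) : HasAtMostConjugates g⁻¹ c :=
  hg.of_mem_closure (inv_mem (Subgroup.subset_closure (Set.mem_singleton g)))

theorem HasAtMostConjugates.mul (hg : HasAtMostConjugates g c) (hh : HasAtMostConjugates h d) :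
    HasAtMostConjugates (g * h) (c * d) :=
  hasAtMostConjugates_of_le_centralizer
    (fun y (hy : y ∈ centralizer {g} ⊓ centralizer {h}) =>
      mem_centralizer_singleton_iff.mpr (Commute.mul_right (mem_centralizer_singleton_iff.mp hy.1)
        (mem_centralizer_singleton_iff.mp hy.2)))
    (index_inf_ne_zero hg.1.ne' hh.1.ne') (index_inf_le.trans (Nat.mul_le_mul hg.2 hh.2))

end Conjugates

theorem mem_pow_image_of_mem_closure {G : Type*} [Group G] {M : Subgroup G}
    (habel : ∀ x ∈ M, ∀ y ∈ M, Commute x y) {l : ℕ} {y : G}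
    (hy : y ∈ Subgroup.closure ((· ^ l) '' (M : Set G))) : y ∈ (· ^ l) '' (M : Set G) := by
  induction hy using closure_induction with
  | mem _ hz => exact hz
  | one => exact ⟨1, M.one_mem, one_pow l⟩
  | mul _ _ _ _ ha hb =>
    obtain ⟨a, haM, rfl⟩ := ha
    obtain ⟨b, hbM, rfl⟩ := hb
    exact ⟨a * b, M.mul_mem haM hbM, (habel a haM b hbM).mul_pow l⟩
  | inv _ _ ha =>
    obtain ⟨a, haM, rfl⟩ := ha
    exact ⟨a⁻¹, M.inv_mem haM, inv_pow a l⟩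

theorem exists_pow_mem_inv_mul {M : Type*} [Group M] [TopologicalSpace M] [IsTopologicalGroup M]
    [CompactSpace M] {V : Set M} (hV : IsOpen V) (hVne : V.Nonempty) (x : M) :
    ∃ n, 0 < n ∧ x ^ n ∈ V⁻¹ * V := by
  obtain ⟨t, ht⟩ := compact_covered_by_mul_left_translates isCompact_univ
    (hV.interior_eq.symm ▸ hVne)
  have hcover : ∀ i : ℕ, ∃ g ∈ t, g * x ^ i ∈ V := fun i => by
    simpa using ht (Set.mem_univ (x ^ i))
  choose g hgt hgV using hcover
  obtain ⟨i, j, hij, hgij⟩ := t.finite_toSet.exists_lt_map_eq_of_forall_mem hgt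
  refine ⟨j - i, Nat.sub_pos_of_lt hij, (g i * x ^ i)⁻¹, Set.inv_mem_inv.mpr (hgV i),
    g j * x ^ j, hgV j, ?_⟩
  dsimp only
  rw [hgij, mul_inv_rev, mul_assoc, inv_mul_cancel_left, inv_mul_eq_iff_eq_mul, ← pow_add,
    Nat.add_sub_cancel' hij.le]

section ClosedAbelian

variable {G : Type*} [Group G] {M : Subgroup G} (habel : ∀ x ∈ M, ∀ y ∈ M, Commute x y)
  {k s : ℕ} {V : Set M} (hVconj : ∀ x ∈ V, HasAtMostConjugates ((x : G) ^ k) s)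
include habel hVconj

theorem hasAtMostConjugates_pow_of_mem_inv_mul {x : M} (hx : x ∈ V⁻¹ * V) :
    HasAtMostConjugates ((x : G) ^ k) (s * s) := by
  obtain ⟨a, ha, b, hb, rfl⟩ := hx
  have hak : HasAtMostConjugates ((a : G) ^ k) s := by simpa using (hVconj _ ha).inv
  rw [coe_mul, (habel _ a.2 _ b.2).mul_pow]
  exact hak.mul (hVconj b hb)

theorem exists_pow_hasAtMostConjugates [TopologicalSpace G] [IsTopologicalGroup G]
    [CompactSpace M] (hk : 0 < k) (hV : IsOpen V) (hVne : V.Nonempty) :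
    ∃ l, 0 < l ∧ ∀ y : M, HasAtMostConjugates ((y : G) ^ l) (s * s * s) := by
  obtain ⟨t, ht⟩ := compact_covered_by_mul_left_translates isCompact_univ
    (hV.interior_eq.symm ▸ hVne)
  choose n hn hnV using exists_pow_mem_inv_mul hV hVne
  refine ⟨k * ∏ g ∈ t, n g, Nat.mul_pos hk (Finset.prod_pos fun g _ => hn g), fun y => ?_⟩
  obtain ⟨g, hg, hgy⟩ : ∃ g ∈ t, g * y ∈ V := by simpa using ht (Set.mem_univ y)
  have hgl : HasAtMostConjugates ((g : G) ^ (k * ∏ g ∈ t, n g)) (s * s) := by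
    obtain ⟨r, hr⟩ := Finset.dvd_prod_of_mem n hg
    rw [hr, show k * (n g * r) = n g * k * r by ring, pow_mul, pow_mul, ← coe_pow]
    exact (hasAtMostConjugates_pow_of_mem_inv_mul habel hVconj (hnV g)).pow _
  have hgyl := (hVconj _ hgy).pow (∏ g ∈ t, n g)
  rw [← pow_mul] at hgyl
  have hsplit : (y : G) = (g : G)⁻¹ * ((g * y : M) : G) := by simp
  rw [hsplit, (habel _ (M.inv_mem g.2) _ (g * y).2).mul_pow, inv_pow]
  exact hgl.inv.mul hgyl

end ClosedAbelian

theorem stmt12_general {G : Type*} [Group G] [TopologicalSpace G] [IsTopologicalGroup G]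
    [CompactSpace G]
    (M : Subgroup G) (hM : IsClosed (M : Set G))
    (habel : ∀ x ∈ M, ∀ y ∈ M, Commute x y)
    (k s : ℕ) (hk : 0 < k) (hs : 0 < s)
    (V : Set ↥M) (hV : IsOpen V) (hVne : V.Nonempty)
    (hVconj : ∀ x ∈ V, 0 < (Subgroup.centralizer {(x : G) ^ k}).index ∧
      (Subgroup.centralizer {(x : G) ^ k}).index ≤ s) :
    ∃ l m : ℕ, 0 < l ∧ 0 < m ∧
      ∀ y ∈ Subgroup.closure ((fun g : G => g ^ l) '' (M : Set G)),
        0 < (Subgroup.centralizer {y}).index ∧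
          (Subgroup.centralizer {y}).index ≤ m * s := by
  have : CompactSpace M := isCompact_iff_compactSpace.mp hM.isCompact
  obtain ⟨l, hl, hbound⟩ := exists_pow_hasAtMostConjugates habel hVconj hk hV hVne
  refine ⟨l, s * s, hl, by positivity, fun y hy => ?_⟩
  obtain ⟨z, hz, rfl⟩ := mem_pow_image_of_mem_closure habel hy
  exact hbound ⟨z, hz⟩

/-- If `M` is a closed abelian subgroup of a compact group `G` and some nonempty open
subset `V` of `M` satisfies that `x^k` has at most `s` conjugates in `G` for all `x ∈ V`,
then there are positive integers `l, m` such that every element of `M^l` (the subgroup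
generated by `l`-th powers of elements of `M`) has at most `m·s` conjugates in `G`. -/
theorem stmt12 {G : Type*} [Group G] [TopologicalSpace G] [IsTopologicalGroup G]
    [CompactSpace G] [T2Space G]
    (M : Subgroup G) (hM : IsClosed (M : Set G))
    (habel : ∀ x ∈ M, ∀ y ∈ M, Commute x y)
    (k s : ℕ) (hk : 0 < k) (hs : 0 < s)
    (V : Set ↥M) (hV : IsOpen V) (hVne : V.Nonempty)
    (hVconj : ∀ x ∈ V, 0 < (Subgroup.centralizer {(x : G) ^ k}).index ∧
      (Subgroup.centralizer {(x : G) ^ k}).index ≤ s) :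
    ∃ l m : ℕ, 0 < l ∧ 0 < m ∧
      ∀ y ∈ Subgroup.closure ((fun g : G => g ^ l) '' (M : Set G)),
        0 < (Subgroup.centralizer {y}).index ∧
          (Subgroup.centralizer {y}).index ≤ m * s :=
  stmt12_general M hM habel k s hk hs V hV hVne hVconj
end
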